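/- arXiv:1312.0108 — 4 statements merged into one kernel-verified Lean document; each statement's English description precedes it below -/
import Mathlib

section
/- The kernel of the Laplacian on homogeneous polynomials of degree ν equals the orthogonal complement of the image of multiplication by |x|² (as a map from homogeneous polynomials of degree ν−2 to degree ν), with respect to the Fischer inner product ⟨x^α, x^β⟩ = α! δ_{αβ}. -/
/-!
Multiplication by `xⱼ` is the Fischer adjoint of `∂ⱼ`, so multiplication by `|x|²` is the adjoint
of `Δ`: `⟨P, |x|² Q⟩ = ⟨Δ P, Q⟩`. Hence harmonic `P` are orthogonal to `|x|² Q`; conversely, if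
`P` is orthogonal to all of them, take `Q = Δ P` (homogeneous of degree `ν - 2`) to get
`⟨Δ P, Δ P⟩ = 0`, and the Fischer product is positive definite.
-/

open MvPolynomial

/-- The Laplacian on polynomials. -/
noncomputable def laplacian {n : ℕ} (P : MvPolynomial (Fin n) ℂ) : MvPolynomial (Fin n) ℂ :=
  ∑ j, pderiv j (pderiv j P)

/-- The Fischer (Bombieri) inner product: ⟨x^α, x^β⟩ = α! δ_{αβ}, extended sesquilinearly. -/
noncomputable def fischer {n : ℕ} (f g : MvPolynomial (Fin n) ℂ) : ℂ :=
  ∑ α ∈ f.support ∪ g.support,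
    (starRingEnd ℂ) (coeff α f) * coeff α g * ∏ j, (Nat.factorial (α j) : ℂ)

lemma Finsupp.prod_factorial_single_add {σ : Type*} [Fintype σ] [DecidableEq σ]
    (i : σ) (m : σ →₀ ℕ) :
    ∏ k, ((single i 1 + m : σ →₀ ℕ) k).factorial = (m i + 1) * ∏ k, (m k).factorial := by
  rw [← Finset.mul_prod_erase _ _ (Finset.mem_univ i),
    ← Finset.mul_prod_erase _ (fun k => (m k).factorial) (Finset.mem_univ i),
    Finset.prod_congr rfl fun k hk => by
      rw [add_apply, single_eq_of_ne' (Finset.ne_of_mem_erase hk).symm, zero_add]]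
  simp [add_comm 1, Nat.factorial_succ, mul_assoc]

lemma MvPolynomial.IsHomogeneous.laplacian {n ν : ℕ} {P : MvPolynomial (Fin n) ℂ}
    (hP : P.IsHomogeneous ν) : (laplacian P).IsHomogeneous (ν - 2) :=
  IsHomogeneous.sum _ _ _ fun _ _ => by simpa [Nat.sub_sub] using hP.pderiv.pderiv

section Fischer

variable {n : ℕ}

lemma fischer_eq_sum_support_left (f g : MvPolynomial (Fin n) ℂ) :
    fischer f g = ∑ α ∈ f.support,
      (starRingEnd ℂ) (coeff α f) * coeff α g * ∏ j, ((α j).factorial : ℂ) :=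
  (Finset.sum_subset Finset.subset_union_left fun α _ hα => by
    simp [notMem_support_iff.mp hα]).symm

lemma fischer_eq_sum_support_right (f g : MvPolynomial (Fin n) ℂ) :
    fischer f g = ∑ α ∈ g.support,
      (starRingEnd ℂ) (coeff α f) * coeff α g * ∏ j, ((α j).factorial : ℂ) :=
  (Finset.sum_subset Finset.subset_union_right fun α _ hα => by
    simp [notMem_support_iff.mp hα]).symm

lemma fischer_sum_right {ι : Type*} (f : MvPolynomial (Fin n) ℂ) (s : Finset ι)
    (g : ι → MvPolynomial (Fin n) ℂ) :
    fischer f (∑ i ∈ s, g i) = ∑ i ∈ s, fischer f (g i) := by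
  simp only [fischer_eq_sum_support_left, coeff_sum, Finset.mul_sum, Finset.sum_mul]
  exact Finset.sum_comm

lemma fischer_sum_left {ι : Type*} (s : Finset ι) (f : ι → MvPolynomial (Fin n) ℂ)
    (g : MvPolynomial (Fin n) ℂ) :
    fischer (∑ i ∈ s, f i) g = ∑ i ∈ s, fischer (f i) g := by
  simp only [fischer_eq_sum_support_right, coeff_sum, map_sum, Finset.sum_mul]
  exact Finset.sum_comm

lemma fischer_X_mul (j : Fin n) (P Q : MvPolynomial (Fin n) ℂ) :
    fischer P (X j * Q) = fischer (pderiv j P) Q := by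
  rw [fischer_eq_sum_support_right, support_X_mul, Finset.sum_map,
    fischer_eq_sum_support_right]
  refine Finset.sum_congr rfl fun β _ => ?_
  simp only [addLeftEmbedding_apply, coeff_X_mul, coeff_pderiv, add_comm β, map_mul]
  rw [← Nat.cast_prod, Finsupp.prod_factorial_single_add]
  push_cast
  simp only [map_add, map_natCast, map_one]
  ring

lemma fischer_X_sq_mul (j : Fin n) (P Q : MvPolynomial (Fin n) ℂ) :
    fischer P (X j ^ 2 * Q) = fischer (pderiv j (pderiv j P)) Q := by
  rw [sq, mul_assoc, fischer_X_mul, fischer_X_mul]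

lemma fischer_sum_X_sq_mul (P Q : MvPolynomial (Fin n) ℂ) :
    fischer P ((∑ j, X j ^ 2) * Q) = fischer (laplacian P) Q := by
  simp only [Finset.sum_mul, fischer_sum_right, laplacian, fischer_sum_left, fischer_X_sq_mul]

lemma fischer_self (f : MvPolynomial (Fin n) ℂ) :
    fischer f f = ((∑ α ∈ f.support,
      Complex.normSq (coeff α f) * ∏ j, ((α j).factorial : ℝ) : ℝ) : ℂ) := by
  rw [fischer_eq_sum_support_left]
  push_cast
  refine Finset.sum_congr rfl fun α _ => ?_
  rw [mul_comm ((starRingEnd ℂ) _), Complex.mul_conj]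

lemma eq_zero_of_fischer_self_eq_zero {f : MvPolynomial (Fin n) ℂ} (h : fischer f f = 0) :
    f = 0 := by
  by_contra hf
  have hpos : 0 < ∑ α ∈ f.support, Complex.normSq (coeff α f) * ∏ j, ((α j).factorial : ℝ) :=
    Finset.sum_pos (fun α hα => mul_pos (Complex.normSq_pos.mpr (mem_support_iff.mp hα))
      (by positivity)) (support_nonempty.mpr hf)
  rw [fischer_self, Complex.ofReal_eq_zero] at h
  exact hpos.ne' h

end Fischer

theorem ker_laplacian_eq_orthogonal_range_mul_general (n ν : ℕ) :
    {P : MvPolynomial (Fin n) ℂ | P.IsHomogeneous ν ∧ laplacian P = 0}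
      = {P : MvPolynomial (Fin n) ℂ | P.IsHomogeneous ν ∧
          ∀ Q : MvPolynomial (Fin n) ℂ, Q.IsHomogeneous (ν - 2) →
            fischer P ((∑ j, X j ^ 2) * Q) = 0} := by
  ext P
  simp only [Set.mem_ofPred_eq, fischer_sum_X_sq_mul]
  refine and_congr_right fun hP => ⟨fun hΔ Q _ => ?_, fun h => ?_⟩
  · simp [hΔ, fischer_eq_sum_support_left]
  · exact eq_zero_of_fischer_self_eq_zero (h _ hP.laplacian)

/-- On homogeneous polynomials of degree ν, the kernel of the Laplacian is the Fischer-orthogonal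
complement of the image of multiplication by |x|² from degree ν − 2. -/
theorem ker_laplacian_eq_orthogonal_range_mul (n ν : ℕ) (hn : 2 ≤ n) :
    {P : MvPolynomial (Fin n) ℂ | P.IsHomogeneous ν ∧ laplacian P = 0}
      = {P : MvPolynomial (Fin n) ℂ | P.IsHomogeneous ν ∧
          ∀ Q : MvPolynomial (Fin n) ℂ, Q.IsHomogeneous (ν - 2) →
            fischer P ((∑ j, X j ^ 2) * Q) = 0} :=
  ker_laplacian_eq_orthogonal_range_mul_general n ν
end

section
/- For a homogeneous polynomial f of degree ν in n ≥ 2 variables, f vanishes on the isotropic cone {a ∈ ℂⁿ : Σⱼ aⱼ² = 0} if and only if f is divisible by |x|² = x₁² + ... + xₙ² in ℂ[x₁,...,xₙ]. -/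
/-!
Over a field of characteristic different from 2, a square factor `p²` of `q = ∑ⱼ xⱼ²` would
divide every partial derivative `∂ⱼ q = 2 xⱼ`, hence divide two distinct variables, so `p` is a
unit: `q` is squarefree. Thus `(q)` is a radical ideal, and by the Nullstellensatz it is the
ideal of all polynomials vanishing on the isotropic cone `{q = 0}`.
-/

open MvPolynomial

theorem Derivation.dvd_apply_of_mul_self_dvd {R A : Type*} [CommSemiring R] [CommSemiring A]
    [Algebra R A] (D : Derivation R A A) {a b : A} (h : a * a ∣ b) : a ∣ D b := by
  obtain ⟨c, rfl⟩ := h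
  simp only [D.leibniz, smul_eq_mul]
  exact dvd_add (dvd_mul_of_dvd_left (dvd_mul_right a a) _)
    (dvd_mul_of_dvd_right (dvd_add (dvd_mul_right a _) (dvd_mul_right a _)) _)

namespace MvPolynomial

variable {σ K : Type*} [Field K]

theorem dvd_of_squarefree_of_forall_eval_eq_zero [IsAlgClosed K] [Finite σ]
    {q f : MvPolynomial σ K} (hq : Squarefree q) (h : ∀ x, eval x q = 0 → eval x f = 0) :
    q ∣ f := by
  have hrad : (Ideal.span {q}).IsRadical := isRadical_iff_span_singleton.mp hq.isRadical
  have hf : f ∈ vanishingIdeal K (zeroLocus K (Ideal.span {q})) := fun x hx =>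
    h x (mem_zeroLocus_iff.mp hx q (Ideal.subset_span rfl))
  rwa [vanishingIdeal_zeroLocus_eq_radical, hrad.radical, Ideal.mem_span_singleton] at hf

theorem pderiv_sum_X_sq {R : Type*} [CommSemiring R] [Fintype σ] [DecidableEq σ] (i : σ) :
    pderiv i (∑ j, X j ^ 2 : MvPolynomial σ R) = 2 * X i := by
  simp [Pi.single_apply, mul_comm]

theorem squarefree_sum_X_sq [Fintype σ] [Nontrivial σ] [NeZero (2 : K)] :
    Squarefree (∑ j, X j ^ 2 : MvPolynomial σ K) := by
  classical
  intro p hp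
  have hdvd : ∀ i, p ∣ X i := fun i => by
    have h2 : IsUnit (2 : MvPolynomial σ K) := by
      simpa only [map_ofNat] using
        (IsUnit.mk0 (2 : K) two_ne_zero).map (C : K →+* MvPolynomial σ K)
    have := (pderiv i).dvd_apply_of_mul_self_dvd hp
    rwa [pderiv_sum_X_sq, h2.dvd_mul_left] at this
  obtain ⟨i, j, hij⟩ := exists_pair_ne σ
  refine ((X_prime (R := K) (i := i)).irreducible.dvd_iff.mp (hdvd i)).resolve_right
    fun hassoc => hij ?_
  exact X_dvd_X.mp (hassoc.dvd_iff_dvd_left.mpr (hdvd j))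

end MvPolynomial

theorem vanish_isotropic_iff_normSq_dvd_general (n : ℕ) (hn : 2 ≤ n)
    (f : MvPolynomial (Fin n) ℂ) :
    (∀ a : Fin n → ℂ, (∑ j, a j ^ 2) = 0 → eval a f = 0) ↔
      (∑ j, (X j : MvPolynomial (Fin n) ℂ) ^ 2) ∣ f := by
  have : Nontrivial (Fin n) := Fin.nontrivial_iff_two_le.mpr hn
  refine ⟨fun h => dvd_of_squarefree_of_forall_eval_eq_zero squarefree_sum_X_sq
    fun a ha => h a (by simpa using ha), ?_⟩
  rintro ⟨g, rfl⟩ a ha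
  simp [ha]

/-- A homogeneous polynomial vanishes on the isotropic cone iff it is divisible by |x|². -/
theorem vanish_isotropic_iff_normSq_dvd (n ν : ℕ) (hn : 2 ≤ n)
    (f : MvPolynomial (Fin n) ℂ) (hf : f.IsHomogeneous ν) :
    (∀ a : Fin n → ℂ, (∑ j, a j ^ 2) = 0 → eval a f = 0) ↔
      (∑ j, (X j : MvPolynomial (Fin n) ℂ) ^ 2) ∣ f :=
  vanish_isotropic_iff_normSq_dvd_general n hn f
end

section
/- Weyl differencing inequality: let (a_c)_{|c| ≤ M} be complex numbers and 1 ≤ Y ≤ M an integer. Then Y² |Σ_{|c| ≤ M} a_c|² ≤ (2M + 2Y + 1) Σ_{|c| ≤ M+Y} |Σ_{|d| ≤ Y, |c+d| ≤ M, 2|d} a_{c+d}|², where the inner sum runs over even d with |d| ≤ Y and |c+d| ≤ M. -/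
/-- Weyl differencing inequality (shift-and-average plus Cauchy–Schwarz). -/
theorem weyl_differencing (M Y : ℕ) (hY : 1 ≤ Y) (hYM : Y ≤ M) (a : ℤ → ℂ) :
    (Y : ℝ) ^ 2 * ‖∑ c ∈ Finset.Icc (-(M : ℤ)) M, a c‖ ^ 2 ≤
      (2 * M + 2 * Y + 1) *
        ∑ c ∈ Finset.Icc (-(M : ℤ) - Y) ((M : ℤ) + Y),
          ‖∑ d ∈ (Finset.Icc (-(Y : ℤ)) Y).filter (fun d => |c + d| ≤ (M : ℤ) ∧ 2 ∣ d),
              a (c + d)‖ ^ 2 := by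
  classical
  set S : ℂ := ∑ c ∈ Finset.Icc (-(M : ℤ)) M, a c with hS
  set T : Finset ℤ := Finset.Icc (-(M : ℤ) - Y) ((M : ℤ) + Y) with hT
  set f : ℤ → ℂ := fun c =>
    ∑ d ∈ (Finset.Icc (-(Y : ℤ)) Y).filter (fun d => |c + d| ≤ (M : ℤ) ∧ 2 ∣ d),
      a (c + d) with hf
  set D : Finset ℤ := (Finset.Icc (-(Y : ℤ)) Y).filter (fun d => 2 ∣ d) with hD
  -- Number of even shifts
  have hDcard : D.card = 2 * (Y / 2) + 1 := by
    have himg : D = Finset.image (fun k : ℤ => 2 * k)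
        (Finset.Icc (-((Y / 2 : ℕ) : ℤ)) ((Y / 2 : ℕ) : ℤ)) := by
      ext d
      simp only [hD, Finset.mem_filter, Finset.mem_Icc, Finset.mem_image]
      constructor
      · rintro ⟨⟨h1, h2⟩, k, rfl⟩
        exact ⟨k, by omega, by omega⟩
      · rintro ⟨k, ⟨hk1, hk2⟩, rfl⟩
        exact ⟨⟨by omega, by omega⟩, k, rfl⟩
    rw [himg, Finset.card_image_of_injective _ (fun x y h => by omega), Int.card_Icc]
    omega
  have hYD : (Y : ℝ) ≤ (D.card : ℝ) := by
    have : Y ≤ D.card := by omega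
    exact_mod_cast this
  -- The key identity: summing the shifted sums recovers D.card copies of S
  have key : ∑ c ∈ T, f c = (D.card : ℂ) * S := by
    have h1 : ∀ c : ℤ, f c = ∑ d ∈ Finset.Icc (-(Y : ℤ)) Y,
        if |c + d| ≤ (M : ℤ) ∧ 2 ∣ d then a (c + d) else 0 := by
      intro c
      exact Finset.sum_filter _ _
    calc ∑ c ∈ T, f c
        = ∑ c ∈ T, ∑ d ∈ Finset.Icc (-(Y : ℤ)) Y,
            if |c + d| ≤ (M : ℤ) ∧ 2 ∣ d then a (c + d) else 0 := by
          exact Finset.sum_congr rfl fun c _ => h1 c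
      _ = ∑ d ∈ Finset.Icc (-(Y : ℤ)) Y, ∑ c ∈ T,
            if |c + d| ≤ (M : ℤ) ∧ 2 ∣ d then a (c + d) else 0 := Finset.sum_comm
      _ = ∑ d ∈ Finset.Icc (-(Y : ℤ)) Y, if 2 ∣ d then S else 0 := by
          refine Finset.sum_congr rfl fun d hd => ?_
          rw [Finset.mem_Icc] at hd
          by_cases h2d : 2 ∣ d
          · simp only [h2d, and_true, if_true]
            rw [← Finset.sum_filter]
            have hfilter : T.filter (fun c => |c + d| ≤ (M : ℤ)) =
                Finset.Icc (-(M : ℤ) - d) ((M : ℤ) - d) := by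
              ext c
              simp only [hT, Finset.mem_filter, Finset.mem_Icc, abs_le]
              omega
            rw [hfilter]
            refine Finset.sum_nbij' (fun c => c + d) (fun e => e - d) ?_ ?_ ?_ ?_ ?_
            · intro c hc
              simp only [Finset.mem_Icc] at hc ⊢
              omega
            · intro e he
              simp only [Finset.mem_Icc] at he ⊢
              omega
            · intro c _; ring
            · intro e _; ring
            · intro c _; rfl
          · simp only [h2d, and_false, if_false, Finset.sum_const_zero]
      _ = ∑ _d ∈ D, S := by rw [hD, Finset.sum_filter]
      _ = (D.card : ℂ) * S := by rw [Finset.sum_const, nsmul_eq_mul]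
  -- Cauchy–Schwarz
  have hCS : ‖∑ c ∈ T, f c‖ ^ 2 ≤ (T.card : ℝ) * ∑ c ∈ T, ‖f c‖ ^ 2 := by
    calc ‖∑ c ∈ T, f c‖ ^ 2 ≤ (∑ c ∈ T, ‖f c‖) ^ 2 := by
          have := norm_sum_le T f
          have h0 : (0 : ℝ) ≤ ‖∑ c ∈ T, f c‖ := norm_nonneg _
          nlinarith
      _ ≤ (T.card : ℝ) * ∑ c ∈ T, ‖f c‖ ^ 2 := sq_sum_le_card_mul_sum_sq
  have hTcard : (T.card : ℝ) = 2 * M + 2 * Y + 1 := by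
    rw [hT, Int.card_Icc]
    have : ((M : ℤ) + Y + 1 - (-(M : ℤ) - Y)).toNat = 2 * M + 2 * Y + 1 := by omega
    rw [this]; push_cast; ring
  have hnormkey : ‖∑ c ∈ T, f c‖ ^ 2 = (D.card : ℝ) ^ 2 * ‖S‖ ^ 2 := by
    rw [key, norm_mul, mul_pow]
    norm_num
  have hmain : (Y : ℝ) ^ 2 * ‖S‖ ^ 2 ≤ (D.card : ℝ) ^ 2 * ‖S‖ ^ 2 := by
    have hY0 : (0 : ℝ) ≤ (Y : ℝ) := by positivity
    gcongr
  calc (Y : ℝ) ^ 2 * ‖S‖ ^ 2 ≤ (D.card : ℝ) ^ 2 * ‖S‖ ^ 2 := hmain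
    _ = ‖∑ c ∈ T, f c‖ ^ 2 := hnormkey.symm
    _ ≤ (T.card : ℝ) * ∑ c ∈ T, ‖f c‖ ^ 2 := hCS
    _ = (2 * M + 2 * Y + 1) * ∑ c ∈ T, ‖f c‖ ^ 2 := by rw [hTcard]
end

section
/- Let f : [a, b] → ℝ be continuously differentiable and monotone with |f'(x)| ≤ θ < 1 for all x ∈ [a, b]. Then the exponential sum Σ_{a ≤ n ≤ b} e(f(n)) satisfies |Σ_{a ≤ n ≤ b} e(f(n))| ≪ 1/(1−θ) · (1 + 1/min_{x} |f'(x)|) when f' does not vanish; in particular if f' ≍ δ with 0 < δ < 1 then the sum is ≪ δ^{-1}. -/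
/-!
Let `n₀ = ⌈a⌉` and `φ k = f (n₀ + k)`. As `f'` never vanishes, Darboux's theorem gives it a
constant sign, and replacing `f` by `-f` (which conjugates the sum) we may take `δ ≤ f' ≤ θ`.
By the mean value theorem the increments `d k = φ (k + 1) - φ k` are values of `f'` at increasing
points, so they lie in `[δ, θ]` and are monotone in `k`. Since `0 < d k < 1`,
`e (φ k) = w k * (e (φ (k + 1)) - e (φ k))` with `w k = (e (d k) - 1)⁻¹ = -(1 + i cot (π d k)) / 2`.
Abel summation bounds the sum by `‖w 0‖ + ‖w m‖ + ∑ ‖w (k + 1) - w k‖`, and the last sum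
telescopes to `|cot (π d m) - cot (π d 0)| / 2` because `cot (π d k)` is monotone. Finally
`sin (π x) ≥ 2 x (1 - x)` gives `|cot (π x)| ≤ (1 / x + 1 / (1 - x)) / 2 ≤ (1 / δ + 1 / (1 - θ)) / 2`.
-/

open Real Finset

noncomputable def e (z : ℝ) : ℂ := Complex.exp (2 * Real.pi * Complex.I * z)

lemma e_add (x y : ℝ) : e (x + y) = e x * e y := by
  rw [e, e, e, ← Complex.exp_add]
  push_cast
  ring_nf

lemma norm_e (x : ℝ) : ‖e x‖ = 1 := by
  rw [e, Complex.norm_exp]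
  simp

lemma e_neg (x : ℝ) : e (-x) = starRingEnd ℂ (e x) := by
  rw [e, e, ← Complex.exp_conj, map_mul, map_mul, map_mul, Complex.conj_I, Complex.conj_ofReal,
    Complex.conj_ofReal, map_ofNat]
  push_cast
  ring_nf

lemma e_ne_one {x : ℝ} (h0 : 0 < x) (h1 : x < 1) : e x ≠ 1 := by
  rw [e, Ne, Complex.exp_eq_one_iff]
  rintro ⟨n, hn⟩
  have hx : x = n := by
    have : (x : ℂ) = n := by
      apply mul_left_cancel₀ (show 2 * (π : ℂ) * Complex.I ≠ 0 by simp [Real.pi_ne_zero])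
      linear_combination hn
    exact_mod_cast this
  rcases le_or_gt n 0 with hn0 | hn0
  · have : (n : ℝ) ≤ 0 := by exact_mod_cast hn0
    linarith
  · have : (1 : ℝ) ≤ n := by exact_mod_cast hn0
    linarith

lemma inv_e_sub_one {x : ℝ} (hx : e x ≠ 1) :
    (e x - 1)⁻¹ = -(1 + Complex.I * (cot (π * x) : ℝ)) / 2 := by
  have hE : 1 - e x ≠ 0 := sub_ne_zero.2 (Ne.symm hx)
  rw [Complex.ofReal_cot, Complex.ofReal_mul, Complex.cot_pi_eq_exp_ratio, ← e]
  field_simp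
  ring

lemma e_eq_mul_e_add_sub {d : ℝ} (h0 : 0 < d) (h1 : d < 1) (x : ℝ) :
    e x = -(1 + Complex.I * (cot (π * d) : ℝ)) / 2 * (e (x + d) - e x) := by
  have hne := e_ne_one h0 h1
  have : e d - 1 ≠ 0 := sub_ne_zero.2 hne
  rw [← inv_e_sub_one hne, e_add]
  field_simp

lemma cot_le_cot {x y : ℝ} (hx : 0 < x) (hy : y < π) (hxy : x ≤ y) : cot y ≤ cot x := by
  have hsx : 0 < sin x := sin_pos_of_pos_of_lt_pi hx (hxy.trans_lt hy)
  have hsy : 0 < sin y := sin_pos_of_pos_of_lt_pi (hx.trans_le hxy) hy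
  rw [cot_eq_cos_div_sin, cot_eq_cos_div_sin, div_le_div_iff₀ hsy hsx]
  have := sin_nonneg_of_nonneg_of_le_pi (sub_nonneg.2 hxy) (by linarith)
  rw [sin_sub] at this
  linarith

lemma antitoneOn_cot_pi_mul : AntitoneOn (fun x => cot (π * x)) (Set.Ioo 0 1) :=
  fun x hx y hy hxy => cot_le_cot (by nlinarith [pi_pos, hx.1]) (by nlinarith [pi_pos, hy.2])
    (by nlinarith [pi_pos])

lemma two_mul_le_sin_pi_mul {x : ℝ} (h0 : 0 ≤ x) (h1 : x ≤ 1 / 2) : 2 * x ≤ sin (π * x) := by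
  have := mul_le_sin (mul_nonneg pi_pos.le h0) (by nlinarith [pi_pos])
  rwa [← mul_assoc, div_mul_cancel₀ _ pi_ne_zero] at this

lemma two_mul_mul_one_sub_le_sin_pi_mul {x : ℝ} (h0 : 0 ≤ x) (h1 : x ≤ 1) :
    2 * x * (1 - x) ≤ sin (π * x) := by
  rcases le_total x (1 / 2) with hx | hx
  · nlinarith [two_mul_le_sin_pi_mul h0 hx]
  · have := two_mul_le_sin_pi_mul (x := 1 - x) (by linarith) (by linarith)
    rw [mul_one_sub π, sin_pi_sub] at this
    nlinarith

lemma abs_cot_pi_mul_le {x : ℝ} (h0 : 0 < x) (h1 : x < 1) :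
    |cot (π * x)| ≤ (1 / x + 1 / (1 - x)) / 2 := by
  have hlow := two_mul_mul_one_sub_le_sin_pi_mul h0.le h1.le
  have hpos : 0 < 2 * x * (1 - x) := by nlinarith
  calc |cot (π * x)| = |cos (π * x)| / sin (π * x) := by
        rw [cot_eq_cos_div_sin, abs_div, abs_of_pos (hpos.trans_le hlow)]
    _ ≤ 1 / (2 * x * (1 - x)) := div_le_div₀ zero_le_one (abs_cos_le_one _) hpos hlow
    _ = (1 / x + 1 / (1 - x)) / 2 := by
        have : 1 - x ≠ 0 := by linarith
        field_simp
        ring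

lemma abs_cot_pi_mul_le_of_mem_Icc {x δ θ : ℝ} (hδ : 0 < δ) (hθ : θ < 1) (hx : x ∈ Set.Icc δ θ) :
    |cot (π * x)| ≤ (1 / δ + 1 / (1 - θ)) / 2 := by
  have h1 : 0 < 1 - θ := by linarith
  refine (abs_cot_pi_mul_le (hδ.trans_le hx.1) (hx.2.trans_lt hθ)).trans ?_
  gcongr
  exacts [hx.1, hx.2]

lemma norm_neg_one_add_I_mul_div_two_le (t : ℝ) : ‖-(1 + Complex.I * t) / 2‖ ≤ (1 + |t|) / 2 := by
  rw [norm_div, norm_neg, Complex.norm_ofNat]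
  gcongr
  refine (norm_add_le _ _).trans_eq ?_
  simp

lemma norm_neg_one_add_I_mul_div_two_sub (s t : ℝ) :
    ‖-(1 + Complex.I * s) / 2 - -(1 + Complex.I * t) / 2‖ = |s - t| / 2 := by
  rw [show -(1 + Complex.I * s) / 2 - -(1 + Complex.I * t) / 2 = -Complex.I * ((s - t : ℝ) : ℂ) / 2
    by push_cast; ring,
    norm_div, norm_mul, norm_neg, Complex.norm_I, Complex.norm_real, Complex.norm_ofNat, one_mul,
    Real.norm_eq_abs]

lemma sum_range_succ_mul_sub {R : Type*} [CommRing R] (w E : ℕ → R) (m : ℕ) :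
    ∑ k ∈ range (m + 1), w k * (E (k + 1) - E k) =
      w m * E (m + 1) - w 0 * E 0 - ∑ k ∈ range m, (w (k + 1) - w k) * E (k + 1) := by
  induction m with
  | zero => simp [mul_sub]
  | succ m ih => rw [sum_range_succ, ih, sum_range_succ]; ring

lemma norm_sum_range_succ_mul_sub_le {R : Type*} [NormedCommRing R] (w E : ℕ → R) (m : ℕ)
    (hE : ∀ k, ‖E k‖ ≤ 1) :
    ‖∑ k ∈ range (m + 1), w k * (E (k + 1) - E k)‖ ≤
      ‖w 0‖ + ‖w m‖ + ∑ k ∈ range m, ‖w (k + 1) - w k‖ := by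
  have hmul (u : R) (k : ℕ) : ‖u * E k‖ ≤ ‖u‖ :=
    (norm_mul_le _ _).trans (mul_le_of_le_one_right (norm_nonneg _) (hE k))
  rw [sum_range_succ_mul_sub]
  refine (norm_sub_le _ _).trans ?_
  refine (add_le_add (norm_sub_le _ _) (norm_sum_le _ _)).trans ?_
  have := sum_le_sum fun k (_ : k ∈ range m) => hmul (w (k + 1) - w k) (k + 1)
  linarith [hmul (w m) (m + 1), hmul (w 0) 0]

lemma sum_range_abs_sub_eq_of_monotoneOn {u : ℕ → ℝ} {n : ℕ} (hu : MonotoneOn u (Set.Iic n)) :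
    ∑ k ∈ range n, |u (k + 1) - u k| = u n - u 0 := by
  rw [← sum_range_sub]
  refine sum_congr rfl fun k hk => ?_
  have hk : k + 1 ≤ n := mem_range.1 hk
  exact abs_of_nonneg (sub_nonneg.2 (hu (Set.mem_Iic.2 (by omega)) (Set.mem_Iic.2 hk) k.le_succ))

lemma sum_range_abs_sub_eq {u : ℕ → ℝ} {n : ℕ}
    (hu : MonotoneOn u (Set.Iic n) ∨ AntitoneOn u (Set.Iic n)) :
    ∑ k ∈ range n, |u (k + 1) - u k| = |u n - u 0| := by
  have h0n : 0 ∈ Set.Iic n := Nat.zero_le n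
  have hnn : n ∈ Set.Iic n := le_refl n
  rcases hu with hu | hu
  · rw [sum_range_abs_sub_eq_of_monotoneOn hu,
      abs_of_nonneg (sub_nonneg.2 (hu h0n hnn (Nat.zero_le n)))]
  · have h := sum_range_abs_sub_eq_of_monotoneOn hu.neg
    simp only [neg_sub_neg] at h
    rw [abs_sub_comm, abs_of_nonneg (sub_nonneg.2 (hu h0n hnn (Nat.zero_le n))), ← h]
    exact sum_congr rfl fun k _ => abs_sub_comm _ _

theorem norm_sum_range_e_le {φ : ℕ → ℝ} {n : ℕ} {δ θ : ℝ} (hδ : 0 < δ) (hθ : θ < 1)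
    (hd : ∀ k < n, φ (k + 1) - φ k ∈ Set.Icc δ θ)
    (hmono : MonotoneOn (fun k => φ (k + 1) - φ k) (Set.Iio n) ∨
      AntitoneOn (fun k => φ (k + 1) - φ k) (Set.Iio n)) :
    ‖∑ k ∈ range n, e (φ k)‖ ≤ 1 + 1 / δ + 1 / (1 - θ) := by
  have hθ' : 0 < 1 - θ := by linarith
  obtain _ | m := n
  · simp only [range_zero, sum_empty, norm_zero]
    positivity
  set d := fun k => φ (k + 1) - φ k
  set c := fun k => cot (π * d k)
  set w : ℕ → ℂ := fun k => -(1 + Complex.I * c k) / 2 with hw_def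
  have hdm : ∀ k ≤ m, d k ∈ Set.Icc δ θ := fun k hk => hd k (Nat.lt_succ_of_le hk)
  have hd01 : ∀ k ≤ m, d k ∈ Set.Ioo 0 1 := fun k hk =>
    ⟨hδ.trans_le (hdm k hk).1, (hdm k hk).2.trans_lt hθ⟩
  have hterm : ∀ k ≤ m, e (φ k) = w k * (e (φ (k + 1)) - e (φ k)) := fun k hk => by
    have := e_eq_mul_e_add_sub (hd01 k hk).1 (hd01 k hk).2 (φ k)
    rwa [show φ k + d k = φ (k + 1) from add_sub_cancel _ _] at this
  have hsub : Set.Iic m ⊆ Set.Iio (m + 1) := Set.Iic_subset_Iio.2 m.lt_succ_self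
  have hc : MonotoneOn c (Set.Iic m) ∨ AntitoneOn c (Set.Iic m) := by
    rcases hmono with h | h
    · exact .inr (antitoneOn_cot_pi_mul.comp_MonotoneOn (h.mono hsub) hd01)
    · exact .inl (antitoneOn_cot_pi_mul.comp (h.mono hsub) hd01)
  have hcK : ∀ k ≤ m, |c k| ≤ (1 / δ + 1 / (1 - θ)) / 2 := fun k hk =>
    abs_cot_pi_mul_le_of_mem_Icc hδ hθ (hdm k hk)
  calc ‖∑ k ∈ range (m + 1), e (φ k)‖
      = ‖∑ k ∈ range (m + 1), w k * (e (φ (k + 1)) - e (φ k))‖ := by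
        rw [sum_congr rfl fun k hk => hterm k (Nat.lt_succ_iff.1 (mem_range.1 hk))]
    _ ≤ ‖w 0‖ + ‖w m‖ + ∑ k ∈ range m, ‖w (k + 1) - w k‖ :=
        norm_sum_range_succ_mul_sub_le _ _ m fun k => (norm_e _).le
    _ ≤ (1 + |c 0|) / 2 + (1 + |c m|) / 2 + |c m - c 0| / 2 := by
        simp only [hw_def, norm_neg_one_add_I_mul_div_two_sub, ← sum_div,
          sum_range_abs_sub_eq hc]
        gcongr <;> exact norm_neg_one_add_I_mul_div_two_le _
    _ ≤ 1 + 1 / δ + 1 / (1 - θ) := by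
        have h1 := hcK 0 m.zero_le
        have h2 := hcK m le_rfl
        have h3 := abs_sub (c m) (c 0)
        linarith

lemma exists_mem_Ioo_deriv_eq_sub {f : ℝ → ℝ} {x : ℝ}
    (hf : ∀ y ∈ Set.Icc x (x + 1), DifferentiableAt ℝ f y) :
    ∃ ξ ∈ Set.Ioo x (x + 1), deriv f ξ = f (x + 1) - f x := by
  obtain ⟨ξ, hξ, hslope⟩ := exists_deriv_eq_slope f (lt_add_one x)
    (fun y hy => (hf y hy).continuousAt.continuousWithinAt)
    (fun y hy => (hf y (Set.Ioo_subset_Icc_self hy)).differentiableWithinAt)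
  exact ⟨ξ, hξ, by rw [hslope, add_sub_cancel_left, div_one]⟩

lemma monotoneOn_of_mem_Ioo_add {ξ : ℕ → ℝ} {x₀ : ℝ} {n : ℕ}
    (hξ : ∀ k < n, ξ k ∈ Set.Ioo (x₀ + k) (x₀ + k + 1)) : MonotoneOn ξ (Set.Iio n) := by
  intro i hi j hj hij
  rcases hij.eq_or_lt with rfl | hlt
  · rfl
  · have : (i : ℝ) + 1 ≤ j := by exact_mod_cast hlt
    linarith [(hξ i hi).2, (hξ j hj).1]

lemma exists_monotoneOn_deriv_eq_sub {f : ℝ → ℝ} {x₀ : ℝ} {n : ℕ}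
    (hf : ∀ y ∈ Set.Icc x₀ (x₀ + n), DifferentiableAt ℝ f y) :
    ∃ ξ : ℕ → ℝ, MonotoneOn ξ (Set.Iio n) ∧ ∀ k < n,
      ξ k ∈ Set.Icc x₀ (x₀ + n) ∧ deriv f (ξ k) = f (x₀ + ↑(k + 1)) - f (x₀ + k) := by
  have hξ : ∀ k < n, ∃ ξ ∈ Set.Ioo (x₀ + k) (x₀ + k + 1),
      deriv f ξ = f (x₀ + ↑(k + 1)) - f (x₀ + k) := by
    intro k hk
    have hk' : (k : ℝ) + 1 ≤ n := by exact_mod_cast hk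
    rw [Nat.cast_succ, ← add_assoc]
    exact exists_mem_Ioo_deriv_eq_sub fun y hy =>
      hf y ⟨by linarith [hy.1, k.cast_nonneg (α := ℝ)], by linarith [hy.2]⟩
  choose! ξ hξI hξd using hξ
  refine ⟨ξ, monotoneOn_of_mem_Ioo_add hξI, fun k hk => ⟨⟨?_, ?_⟩, hξd k hk⟩⟩
  · linarith [(hξI k hk).1, k.cast_nonneg (α := ℝ)]
  · have hk' : (k : ℝ) + 1 ≤ n := by exact_mod_cast hk
    linarith [(hξI k hk).2]

theorem norm_sum_Icc_e_le_of_deriv_mem_Icc {f : ℝ → ℝ} {a b δ θ : ℝ} (hδ : 0 < δ) (hθ : θ < 1)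
    (hmono : MonotoneOn (deriv f) (Set.Icc a b) ∨ AntitoneOn (deriv f) (Set.Icc a b))
    (hbd : ∀ x ∈ Set.Icc a b, deriv f x ∈ Set.Icc δ θ) :
    ‖∑ n ∈ Icc ⌈a⌉ ⌊b⌋, e (f n)‖ ≤ 2 + 1 / δ + 1 / (1 - θ) := by
  have hθ' : 0 < 1 - θ := by linarith
  rw [Int.Icc_eq_finset_map, sum_map]
  rcases hM : (⌊b⌋ + 1 - ⌈a⌉).toNat with _ | M
  · simp only [range_zero, sum_empty, norm_zero]
    positivity
  set φ : ℕ → ℝ := fun k => f (⌈a⌉ + k)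
  have hφ : ∀ k ∈ range (M + 1),
      e (f ((Nat.castEmbedding.trans (addLeftEmbedding ⌈a⌉)) k : ℤ)) = e (φ k) := by
    intro k _
    simp [φ]
  have hsub : Set.Icc (⌈a⌉ : ℝ) (⌈a⌉ + M) ⊆ Set.Icc a b := by
    have hMb : ((⌈a⌉ + M : ℤ) : ℝ) ≤ b := (Int.cast_le.2 (by omega)).trans (Int.floor_le b)
    push_cast at hMb
    exact Set.Icc_subset_Icc (Int.le_ceil a) hMb
  obtain ⟨ξ, hξmono, hξ⟩ := exists_monotoneOn_deriv_eq_sub fun y hy =>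
    differentiableAt_of_deriv_ne_zero (hδ.trans_le (hbd y (hsub hy)).1).ne'
  have hd : ∀ k < M, φ (k + 1) - φ k ∈ Set.Icc δ θ := fun k hk =>
    (hξ k hk).2 ▸ hbd _ (hsub (hξ k hk).1)
  have hmaps : Set.MapsTo ξ (Set.Iio M) (Set.Icc a b) := fun k hk => hsub (hξ k hk).1
  have hdmono : MonotoneOn (fun k => φ (k + 1) - φ k) (Set.Iio M) ∨
      AntitoneOn (fun k => φ (k + 1) - φ k) (Set.Iio M) := by
    rcases hmono with h | h
    · exact .inl ((h.comp hξmono hmaps).congr fun k hk => (hξ k hk).2)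
    · exact .inr ((h.comp_MonotoneOn hξmono hmaps).congr fun k hk => (hξ k hk).2)
  rw [sum_congr rfl hφ, sum_range_succ]
  calc ‖∑ k ∈ range M, e (φ k) + e (φ M)‖ ≤ ‖∑ k ∈ range M, e (φ k)‖ + ‖e (φ M)‖ :=
        norm_add_le _ _
    _ ≤ (1 + 1 / δ + 1 / (1 - θ)) + 1 :=
        add_le_add (norm_sum_range_e_le hδ hθ hd hdmono) (norm_e _).le
    _ = 2 + 1 / δ + 1 / (1 - θ) := by ring

lemma norm_sum_e_neg {ι : Type*} (s : Finset ι) (g : ι → ℝ) :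
    ‖∑ i ∈ s, e (-g i)‖ = ‖∑ i ∈ s, e (g i)‖ := by
  simp only [e_neg, ← map_sum, Complex.norm_conj]

theorem norm_sum_Icc_e_le_of_abs_deriv {f : ℝ → ℝ} {a b δ θ : ℝ} (hδ : 0 < δ) (hθ : θ < 1)
    (hmono : MonotoneOn (deriv f) (Set.Icc a b) ∨ AntitoneOn (deriv f) (Set.Icc a b))
    (hbd : ∀ x ∈ Set.Icc a b, |deriv f x| ∈ Set.Icc δ θ) :
    ‖∑ n ∈ Icc ⌈a⌉ ⌊b⌋, e (f n)‖ ≤ 2 + 1 / δ + 1 / (1 - θ) := by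
  have hne : ∀ x ∈ Set.Icc a b, deriv f x ≠ 0 := fun x hx h0 => by
    have := (hbd x hx).1
    rw [h0, abs_zero] at this
    linarith
  have hderiv : ∀ x ∈ Set.Icc a b, HasDerivWithinAt f (deriv f x) (Set.Icc a b) x := fun x hx =>
    (differentiableAt_of_deriv_ne_zero (hne x hx)).hasDerivAt.hasDerivWithinAt
  rcases hasDerivWithinAt_forall_lt_or_forall_gt_of_forall_ne (convex_Icc a b) hderiv hne
    with hneg | hpos
  · have hderiv_neg : deriv (fun x => -f x) = fun x => -deriv f x := funext fun x => deriv.neg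
    have hmono_neg : MonotoneOn (deriv fun x => -f x) (Set.Icc a b) ∨
        AntitoneOn (deriv fun x => -f x) (Set.Icc a b) := by
      rw [hderiv_neg]
      exact hmono.symm.imp AntitoneOn.neg MonotoneOn.neg
    have := norm_sum_Icc_e_le_of_deriv_mem_Icc hδ hθ hmono_neg fun x hx => by
      simpa only [hderiv_neg, abs_of_neg (hneg x hx)] using hbd x hx
    rwa [norm_sum_e_neg _ fun n : ℤ => f n] at this
  · refine norm_sum_Icc_e_le_of_deriv_mem_Icc hδ hθ hmono fun x hx => ?_
    simpa only [abs_of_pos (hpos x hx)] using hbd x hx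

/-- Kuzmin–Landau / first-derivative test: if f is C¹ on [a, b] with monotone derivative and
δ ≤ |f'| ≤ θ < 1, then Σ_{a ≤ n ≤ b} e(f(n)) ≪ (1/(1−θ))(1 + 1/δ); in particular for
f' ≍ δ the sum is ≪ δ⁻¹. -/
theorem kuzmin_landau :
    ∃ C : ℝ, 0 < C ∧
      ∀ (a b θ δ : ℝ) (f : ℝ → ℝ), a ≤ b → 0 < δ → θ < 1 →
        ContDiffOn ℝ 1 f (Set.Icc a b) →
        (MonotoneOn (deriv f) (Set.Icc a b) ∨ AntitoneOn (deriv f) (Set.Icc a b)) →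
        (∀ x ∈ Set.Icc a b, δ ≤ |deriv f x| ∧ |deriv f x| ≤ θ) →
        ‖∑ n ∈ Finset.Icc ⌈a⌉ ⌊b⌋, e (f n)‖ ≤ C * (1 / (1 - θ)) * (1 + 1 / δ) := by
  refine ⟨3, by norm_num, fun a b θ δ f hab hδ hθ _ hmono hbd => ?_⟩
  have hδθ : δ ≤ θ := (hbd a (Set.left_mem_Icc.2 hab)).1.trans (hbd a (Set.left_mem_Icc.2 hab)).2
  have hA : 1 ≤ 1 / (1 - θ) := by rw [le_div_iff₀ (by linarith)]; linarith
  have hB : 0 < 1 / δ := by positivity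
  calc ‖∑ n ∈ Finset.Icc ⌈a⌉ ⌊b⌋, e (f n)‖ ≤ 2 + 1 / δ + 1 / (1 - θ) :=
        norm_sum_Icc_e_le_of_abs_deriv hδ hθ hmono hbd
    _ ≤ 3 * (1 / (1 - θ)) * (1 + 1 / δ) := by nlinarith
end
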